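/- There is a computable function which, given any inference rule r, produces an inference rule r_nf in reduced normal form such that r is admissible in LTL_{Past,m} if and only if r_nf is admissible in LTL_{Past,m}. -/

import Mathlib

/-- Formulas of the language of `LTL_{Past,m}`: atoms, negation, conjunction,
`N` (next) and `S` (since). -/
inductive Formula : Type
  | atom : ℕ → Formula
  | neg : Formula → Formula
  | conj : Formula → Formula → Formula
  | next : Formula → Formula
  | since : Formula → Formula → Formula
deriving DecidableEq

namespace Formula

/-- Implication, defined as usual from `¬` and `∧`. -/
def imp (φ ψ : Formula) : Formula := .neg (.conj φ (.neg ψ))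

/-- Disjunction, defined as usual from `¬` and `∧`. -/
def disj (φ ψ : Formula) : Formula := .neg (.conj (.neg φ) (.neg ψ))

/-- The constant true formula `⊤`, defined as usual. -/
def top : Formula := imp (.atom 0) (.atom 0)

/-- `□φ` abbreviates `¬(⊤ S ¬φ)`. -/
def box (φ : Formula) : Formula := .neg (.since top (.neg φ))

end Formula

/-- Truth of a formula at a state `a : ℕ` in a model given by a valuation
`V : ℕ → Set ℕ`, in the bounded (measure of intransitivity `m`) semantics. -/
def Sat (m : ℕ) (V : ℕ → Set ℕ) : Formula → ℕ → Prop
  | .atom i, a => a ∈ V i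
  | .neg φ, a => ¬ Sat m V φ a
  | .conj φ ψ, a => Sat m V φ a ∧ Sat m V ψ a
  | .next φ, a => Sat m V φ (a + 1)
  | .since φ ψ, a =>
      ∃ b, a ≤ b ∧ b ≤ a + m ∧ Sat m V ψ b ∧ ∀ c, a ≤ c → c < b → Sat m V φ c

/-- A formula is valid in a model `V` if it is true at every state. -/
def ValidIn (m : ℕ) (V : ℕ → Set ℕ) (φ : Formula) : Prop := ∀ a : ℕ, Sat m V φ a

/-- The logic `LTL_{Past,m}`: the set of formulas valid in every model. -/
def Logic (m : ℕ) : Set Formula := { φ | ∀ V : ℕ → Set ℕ, ValidIn m V φ }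

/-- Truth at a state in the unbounded (transitive) semantics of `LTL`. -/
def SatU (V : ℕ → Set ℕ) : Formula → ℕ → Prop
  | .atom i, a => a ∈ V i
  | .neg φ, a => ¬ SatU V φ a
  | .conj φ ψ, a => SatU V φ a ∧ SatU V ψ a
  | .next φ, a => SatU V φ (a + 1)
  | .since φ ψ, a =>
      ∃ b, a ≤ b ∧ SatU V ψ b ∧ ∀ c, a ≤ c → c < b → SatU V φ c

/-- The transitive logic `LTL`: formulas true at every state of every model in
the unbounded semantics. -/
def LogicU : Set Formula := { φ | ∀ (V : ℕ → Set ℕ) (a : ℕ), SatU V φ a }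

/-- Truth at a state in the non-uniformly non-transitive semantics, where the
reach of `S` at state `a` is bounded by `f a` for a bound function `f`. -/
def SatB (f : ℕ → ℕ) (V : ℕ → Set ℕ) : Formula → ℕ → Prop
  | .atom i, a => a ∈ V i
  | .neg φ, a => ¬ SatB f V φ a
  | .conj φ ψ, a => SatB f V φ a ∧ SatB f V ψ a
  | .next φ, a => SatB f V φ (a + 1)
  | .since φ ψ, a =>
      ∃ b, a ≤ b ∧ b ≤ f a ∧ SatB f V ψ b ∧ ∀ c, a ≤ c → c < b → SatB f V φ c

/-- The non-uniformly non-transitive logic `LTL_{Past}`: formulas true at every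
state of every model over every bound function. -/
def LogicPast : Set Formula :=
  { φ | ∀ f : ℕ → ℕ, (∀ i, i < f i) → (∀ i, f i < f (i + 1)) →
      ∀ (V : ℕ → Set ℕ) (a : ℕ), SatB f V φ a }

/-- Substitutions map atoms to formulas and extend homomorphically. -/
def substF (σ : ℕ → Formula) : Formula → Formula
  | .atom i => σ i
  | .neg φ => .neg (substF σ φ)
  | .conj φ ψ => .conj (substF σ φ) (substF σ ψ)
  | .next φ => .next (substF σ φ)
  | .since φ ψ => .since (substF σ φ) (substF σ ψ)

/-- An inference rule: a finite list of premises and a conclusion. -/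
structure Rule : Type where
  premises : List Formula
  conclusion : Formula
deriving DecidableEq

/-- A rule is valid in a model `V` if validity of all premises in `V` implies
validity of the conclusion in `V`. -/
def RuleValid (m : ℕ) (V : ℕ → Set ℕ) (r : Rule) : Prop :=
  (∀ φ ∈ r.premises, ValidIn m V φ) → ValidIn m V r.conclusion

/-- A rule is admissible in `LTL_{Past,m}` if every substitution making all
premises theorems also makes the conclusion a theorem. -/
def Admissible (m : ℕ) (r : Rule) : Prop :=
  ∀ σ : ℕ → Formula,
    (∀ φ ∈ r.premises, substF σ φ ∈ Logic m) → substF σ r.conclusion ∈ Logic m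

/-- Admissibility in the transitive logic `LTL`. -/
def AdmissibleU (r : Rule) : Prop :=
  ∀ σ : ℕ → Formula,
    (∀ φ ∈ r.premises, substF σ φ ∈ LogicU) → substF σ r.conclusion ∈ LogicU

/-- The number of symbols in a formula. -/
def sizeF : Formula → ℕ
  | .atom _ => 1
  | .neg φ => sizeF φ + 1
  | .conj φ ψ => sizeF φ + sizeF ψ + 1
  | .next φ => sizeF φ + 1
  | .since φ ψ => sizeF φ + sizeF ψ + 1

/-- The number of symbols in a rule. -/
def ruleSize (r : Rule) : ℕ :=
  (r.premises.map sizeF).sum + sizeF r.conclusion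

/-- An (injective) numerical encoding of formulas. -/
def encF : Formula → ℕ
  | .atom i => 5 * i
  | .neg φ => 5 * encF φ + 1
  | .conj φ ψ => 5 * Nat.pair (encF φ) (encF ψ) + 2
  | .next φ => 5 * encF φ + 3
  | .since φ ψ => 5 * Nat.pair (encF φ) (encF ψ) + 4

/-- An (injective) numerical encoding of rules. -/
def encR (r : Rule) : ℕ :=
  Nat.pair (Encodable.encode (r.premises.map encF)) (encF r.conclusion)

/-- `lit true φ = φ` and `lit false φ = ¬φ`. -/
def lit (t : Bool) (φ : Formula) : Formula := if t then φ else .neg φ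

/-- Conjunction of a list of formulas. -/
def bigConj : List Formula → Formula
  | [] => Formula.top
  | [φ] => φ
  | φ :: ψ :: rest => .conj φ (bigConj (ψ :: rest))

/-- Disjunction of a list of formulas. -/
def bigDisj : List Formula → Formula
  | [] => .neg Formula.top
  | [φ] => φ
  | φ :: ψ :: rest => Formula.disj φ (bigDisj (ψ :: rest))

/-- A single disjunct of a reduced normal form over variables `x_1,…,x_n`
(the atoms `0,…,n-1`): for each `i` a literal over `x_i`, for each `i` a
literal over `N x_i`, and for each pair `i ≠ k` a literal over `x_i S x_k`. -/
def disjunct (n : ℕ) (t0 t1 : Fin n → Bool) (t2 : Fin n → Fin n → Bool) : Formula :=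
  bigConj
    (((List.finRange n).map fun i => lit (t0 i) (.atom i)) ++
     ((List.finRange n).map fun i => lit (t1 i) (.next (.atom i))) ++
     ((List.finRange n).flatMap fun i =>
        ((List.finRange n).filter fun k => k != i).map fun k =>
          lit (t2 i k) (.since (.atom i) (.atom k))))

/-- A rule is in reduced normal form if it has the shape `ε / x_1`, where `ε`
is a disjunction of disjuncts as above. -/
def IsRNF (r : Rule) : Prop :=
  ∃ n : ℕ, 0 < n ∧
    ∃ ds : List ((Fin n → Bool) × (Fin n → Bool) × (Fin n → Fin n → Bool)),
      ds ≠ [] ∧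
      r.premises = [bigDisj (ds.map fun d => disjunct n d.1 d.2.1 d.2.2)] ∧
      r.conclusion = .atom 0

/-- Boolean formulas built from argument places `p_1,…,p_n, q_1,…,q_k` using
only the Boolean connectives `¬` and `∧`. -/
inductive BForm (n k : ℕ) : Type
  | pvar : Fin n → BForm n k
  | qvar : Fin k → BForm n k
  | neg : BForm n k → BForm n k
  | conj : BForm n k → BForm n k → BForm n k

/-- Substitute formulas for the argument places of a Boolean formula. -/
def BForm.substB {n k : ℕ} (α : Fin n → Formula) (δ : Fin k → Formula) :
    BForm n k → Formula
  | .pvar i => α i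
  | .qvar j => δ j
  | .neg φ => Formula.neg (BForm.substB α δ φ)
  | .conj φ ψ => Formula.conj (BForm.substB α δ φ) (BForm.substB α δ ψ)


/-!
The variables `x_0, …, x_{n-1}` of the normal form of a rule `Γ / φ` stand for the formulas of a
list `L` that starts with `φ`, contains `Γ` and is closed under immediate subformulas. Each
`ψ ∈ L` determines `x_ψ` from the variables of its immediate subformulas through its main
connective. The premise of the normal form is the disjunction of all disjuncts (truth values of
`x_i`, `N x_i` and `x_i S x_k`) that respect these definitions and make every premise in `Γ` true,
so under any substitution it holds at a state exactly when the truth values realised there are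
among those disjuncts.

Admissibility transfers in both directions. A unifier `σ` of `Γ` gives the unifier
`x_i ↦ σ(L[i])` of the new premise. Conversely, a unifier `τ` of the new premise forces every
`x_ψ` to obey its definition at every state, so `p ↦ τ(x_p)` sends each `ψ ∈ L` to a formula
equivalent to `τ(x_ψ)` and unifies `Γ`. In both cases the conclusion `x_0` corresponds to `φ`.

The construction is primitive recursive because `encF` is a bijection onto `ℕ`. Taking for `L`
the conclusion followed by all formulas of code at most `encR r` avoids computing subformulas.
-/

namespace Formula

/-- The inverse of `encF`, which is a bijection because `Nat.pair` is. -/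
def decF (n : ℕ) : Formula :=
  if h0 : n % 5 = 0 then .atom (n / 5)
  else if n % 5 = 1 then .neg (decF (n / 5))
  else if n % 5 = 2 then .conj (decF (n / 5).unpair.1) (decF (n / 5).unpair.2)
  else if n % 5 = 3 then .next (decF (n / 5))
  else .since (decF (n / 5).unpair.1) (decF (n / 5).unpair.2)
decreasing_by
  all_goals
    have h5 : n / 5 < n := Nat.div_lt_self (Nat.pos_of_ne_zero (by rintro rfl; simp at h0))
      (by norm_num)
    first
      | exact h5
      | exact (Nat.unpair_left_le _).trans_lt h5
      | exact (Nat.unpair_right_le _).trans_lt h5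

theorem decF_encF (φ : Formula) : decF (encF φ) = φ := by
  induction φ <;> rw [decF] <;> simp_all [encF, Nat.mul_add_div]

theorem encF_decF (n : ℕ) : encF (decF n) = n := by
  induction n using Nat.strong_induction_on with
  | _ n ih =>
    rw [decF]
    have h5 : n % 5 ≠ 0 → n / 5 < n := fun h =>
      Nat.div_lt_self (Nat.pos_of_ne_zero (by rintro rfl; simp at h)) (by norm_num)
    split_ifs with h0 h1 h2 h3 <;> simp only [encF]
    · omega
    · rw [ih _ (h5 h0)]; omega
    · rw [ih _ ((Nat.unpair_left_le _).trans_lt (h5 h0)),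
        ih _ ((Nat.unpair_right_le _).trans_lt (h5 h0)), Nat.pair_unpair]; omega
    · rw [ih _ (h5 h0)]; omega
    · rw [ih _ ((Nat.unpair_left_le _).trans_lt (h5 h0)),
        ih _ ((Nat.unpair_right_le _).trans_lt (h5 h0)), Nat.pair_unpair]; omega

def equivNat : Formula ≃ ℕ := ⟨encF, decF, decF_encF, encF_decF⟩

instance : Denumerable Formula := Denumerable.mk' equivNat

open Primrec

theorem primrec_decF : Primrec decF := Primrec.ofNat Formula

theorem primrec_encF : Primrec encF := Primrec.encode

theorem primrec_atom : Primrec atom :=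
  (primrec_decF.comp (nat_mul.comp (const 5) .id)).of_eq fun i => decF_encF (atom i)

theorem primrec_neg : Primrec neg :=
  (primrec_decF.comp (nat_add.comp (nat_mul.comp (const 5) primrec_encF) (const 1))).of_eq
    fun φ => decF_encF φ.neg

theorem primrec_next : Primrec next :=
  (primrec_decF.comp (nat_add.comp (nat_mul.comp (const 5) primrec_encF) (const 3))).of_eq
    fun φ => decF_encF φ.next

theorem primrec_conj : Primrec₂ conj :=
  (primrec_decF.comp (nat_add.comp (nat_mul.comp (const 5)
    (Primrec₂.natPair.comp (primrec_encF.comp fst) (primrec_encF.comp snd))) (const 2))).of_eq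
    fun p => decF_encF (conj p.1 p.2)

theorem primrec_since : Primrec₂ since :=
  (primrec_decF.comp (nat_add.comp (nat_mul.comp (const 5)
    (Primrec₂.natPair.comp (primrec_encF.comp fst) (primrec_encF.comp snd))) (const 4))).of_eq
    fun p => decF_encF (since p.1 p.2)

theorem primrec_casesOn {α σ : Type*} [Primcodable α] [Primcodable σ] {f : α → Formula}
    {atom' : α → ℕ → σ} {neg' next' : α → Formula → σ}
    {conj' since' : α → Formula × Formula → σ}
    (hf : Primrec f) (hatom : Primrec₂ atom') (hneg : Primrec₂ neg') (hconj : Primrec₂ conj')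
    (hnext : Primrec₂ next') (hsince : Primrec₂ since') :
    Primrec fun a => Formula.casesOn (motive := fun _ => σ) (f a) (atom' a) (neg' a)
      (fun φ ψ => conj' a (φ, ψ)) (next' a) (fun φ ψ => since' a (φ, ψ)) := by
  have hc : Primrec fun a => encF (f a) := primrec_encF.comp hf
  have hq : Primrec fun a => encF (f a) / 5 := nat_div.comp hc (const 5)
  have hrem : ∀ r, PrimrecPred fun a => encF (f a) % 5 = r := fun r =>
    Primrec.eq.comp (nat_mod.comp hc (const 5)) (const r)
  have hsub : Primrec fun a => decF (encF (f a) / 5) := primrec_decF.comp hq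
  have hpair : Primrec fun a =>
      (decF (encF (f a) / 5).unpair.1, decF (encF (f a) / 5).unpair.2) :=
    (primrec_decF.comp (fst.comp (unpair.comp hq))).pair
      (primrec_decF.comp (snd.comp (unpair.comp hq)))
  refine (Primrec.ite (hrem 0) (hatom.comp .id hq) <| .ite (hrem 1) (hneg.comp .id hsub) <|
    .ite (hrem 2) (hconj.comp .id hpair) <| .ite (hrem 3) (hnext.comp .id hsub)
      (hsince.comp .id hpair)).of_eq fun a => ?_
  cases f a <;> simp [encF, Nat.mul_add_div, decF_encF]

def children : Formula → List Formula
  | atom _ => []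
  | neg φ | next φ => [φ]
  | conj φ ψ | since φ ψ => [φ, ψ]

theorem encF_lt_of_mem_children {φ ψ : Formula} (h : ψ ∈ φ.children) : encF ψ < encF φ := by
  cases φ <;> simp only [children, List.mem_cons, List.not_mem_nil, or_false] at h <;>
    rcases h with rfl | rfl <;> simp only [encF]
  all_goals grind [Nat.left_le_pair, Nat.right_le_pair]

end Formula

section Semantics

variable {m : ℕ} {V : ℕ → Set ℕ} {a : ℕ}

theorem sat_since_congr {φ φ' ψ ψ' : Formula} {V' : ℕ → Set ℕ}
    (hφ : ∀ b, Sat m V φ b ↔ Sat m V' φ' b) (hψ : ∀ b, Sat m V ψ b ↔ Sat m V' ψ' b) :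
    Sat m V (.since φ ψ) a ↔ Sat m V' (.since φ' ψ') a :=
  exists_congr fun b => and_congr_right' <| and_congr_right' <|
    and_congr (hψ b) (forall₂_congr fun c _ => imp_congr_right fun _ => hφ c)

def substValuation (m : ℕ) (V : ℕ → Set ℕ) (σ : ℕ → Formula) : ℕ → Set ℕ :=
  fun p => {b | Sat m V (σ p) b}

theorem sat_substF {σ : ℕ → Formula} {φ : Formula} :
    Sat m V (substF σ φ) a ↔ Sat m (substValuation m V σ) φ a := by
  induction φ generalizing a with
  | atom p => rfl
  | neg φ ih => exact not_congr ih
  | conj φ ψ ih ih' => exact and_congr ih ih'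
  | next φ ih => exact ih
  | since φ ψ ih ih' => exact sat_since_congr (fun _ => ih) (fun _ => ih')

theorem sat_top : Sat m V Formula.top a := by
  simp [Sat, Formula.top, Formula.imp]

theorem sat_disj {φ ψ : Formula} : Sat m V (φ.disj ψ) a ↔ Sat m V φ a ∨ Sat m V ψ a := by
  simp only [Formula.disj, Sat]
  tauto

theorem sat_bigConj {l : List Formula} : Sat m V (bigConj l) a ↔ ∀ φ ∈ l, Sat m V φ a := by
  induction l using bigConj.induct <;> simp_all [bigConj, Sat, sat_top]

theorem sat_bigDisj {l : List Formula} : Sat m V (bigDisj l) a ↔ ∃ φ ∈ l, Sat m V φ a := by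
  induction l using bigDisj.induct <;> simp_all [bigDisj, Sat, sat_top, sat_disj]

theorem sat_lit {t : Bool} {φ : Formula} :
    Sat m V (lit t φ) a ↔ (t = true ↔ Sat m V φ a) := by
  cases t <;> simp [lit, Sat]

theorem sat_since_of_sat_right {φ ψ : Formula} (h : Sat m V ψ a) : Sat m V (.since φ ψ) a :=
  ⟨a, le_rfl, Nat.le_add_right _ _, h, fun _ h₁ h₂ => absurd h₂ (not_lt.2 h₁)⟩

theorem sat_since_self {φ : Formula} : Sat m V (.since φ φ) a ↔ Sat m V φ a :=
  ⟨fun ⟨_, hab, _, hb, hc⟩ => (eq_or_lt_of_le hab).elim (· ▸ hb) (hc a le_rfl),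
    sat_since_of_sat_right⟩

end Semantics

/-- Truth values of the literals of a reduced-normal-form disjunct over `x_0, …, x_{n-1}`:
of `x_i`, of `N x_i`, and of `x_i S x_k`, the last stored at position `i * n + k`. -/
abbrev Assignment := List Bool × List Bool × List Bool

namespace Assignment

def now (t : Assignment) (i : ℕ) : Bool := t.1.getD i false

def next (t : Assignment) (i : ℕ) : Bool := t.2.1.getD i false

def since (t : Assignment) (n i k : ℕ) : Bool := t.2.2.getD (i * n + k) false

def Agree (n : ℕ) (t t' : Assignment) : Prop :=
  (∀ i < n, t.now i = t'.now i) ∧ (∀ i < n, t.next i = t'.next i) ∧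
    ∀ i < n, ∀ k < n, i ≠ k → t.since n i k = t'.since n i k

theorem Agree.refl (n : ℕ) (t : Assignment) : Agree n t t :=
  ⟨fun _ _ => rfl, fun _ _ => rfl, fun _ _ _ _ _ => rfl⟩

end Assignment

open Assignment

def boolLists : ℕ → List (List Bool)
  | 0 => [[]]
  | n + 1 => (boolLists n).flatMap fun l => [true :: l, false :: l]

theorem mem_boolLists {n : ℕ} {l : List Bool} : l ∈ boolLists n ↔ l.length = n := by
  induction n generalizing l with
  | zero => simp [boolLists]
  | succ n ih =>
    rcases l with _ | ⟨b, l⟩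
    · simp [boolLists]
    · cases b <;> simp [boolLists, ih]

def assignments (n : ℕ) : List Assignment :=
  boolLists n ×ˢ boolLists n ×ˢ boolLists (n * n)

def rnfDisjunct (n : ℕ) (t : Assignment) : Formula :=
  bigConj
    (((List.range n).map fun i => lit (t.now i) (.atom i)) ++
     ((List.range n).map fun i => lit (t.next i) (.next (.atom i))) ++
     ((List.range n).flatMap fun i =>
        ((List.range n).filter fun k => k != i).map fun k =>
          lit (t.since n i k) (.since (.atom i) (.atom k))))

theorem rnfDisjunct_eq_disjunct (n : ℕ) (t : Assignment) :
    rnfDisjunct n t =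
      disjunct n (fun i => t.now i) (fun i => t.next i) (fun i k => t.since n i k) := by
  simp only [rnfDisjunct, disjunct, ← List.map_coe_finRange_eq_range, List.map_map,
    List.flatMap_map, List.filter_map]
  congr
  funext i
  congr 2
  funext k
  simp [bne, Fin.val_inj]

theorem eq_decide_iff {b : Bool} {p : Prop} [Decidable p] : b = decide p ↔ (b = true ↔ p) := by
  cases b <;> simp

open Classical in
noncomputable def truthAssignment (m : ℕ) (W : ℕ → Set ℕ) (a n : ℕ) : Assignment :=
  ((List.range n).map fun i => decide (a ∈ W i),
   (List.range n).map fun i => decide (a + 1 ∈ W i),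
   (List.range (n * n)).map fun p => decide (Sat m W (.since (.atom (p / n)) (.atom (p % n))) a))

section TruthAssignment

variable {m n : ℕ} {W : ℕ → Set ℕ} {a : ℕ}

theorem truthAssignment_mem_assignments : truthAssignment m W a n ∈ assignments n := by
  simp [truthAssignment, assignments, List.mem_product, mem_boolLists]

open Classical in
theorem now_truthAssignment {i : ℕ} (hi : i < n) :
    (truthAssignment m W a n).now i = decide (a ∈ W i) := by
  simp [truthAssignment, now, hi]

open Classical in
theorem next_truthAssignment {i : ℕ} (hi : i < n) :
    (truthAssignment m W a n).next i = decide (a + 1 ∈ W i) := by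
  simp [truthAssignment, next, hi]

open Classical in
theorem since_truthAssignment {i k : ℕ} (hi : i < n) (hk : k < n) :
    (truthAssignment m W a n).since n i k = decide (Sat m W (.since (.atom i) (.atom k)) a) := by
  have hn : 0 < n := by omega
  have hlt : i * n + k < n * n := by nlinarith
  have hdiv : (i * n + k) / n = i := by
    rw [add_comm, Nat.add_mul_div_right _ _ hn, Nat.div_eq_of_lt hk, zero_add]
  simp [truthAssignment, since, hlt, hdiv, Nat.mod_eq_of_lt hk]

open Classical in
theorem sat_rnfDisjunct {t : Assignment} :
    Sat m W (rnfDisjunct n t) a ↔ Agree n t (truthAssignment m W a n) := by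
  simp only [rnfDisjunct, sat_bigConj, List.forall_mem_append, List.forall_mem_map,
    List.forall_mem_flatMap, List.mem_filter, List.mem_range, sat_lit, Agree, bne_iff_ne, ne_eq,
    and_imp, and_assoc]
  refine and_congr ?_ (and_congr ?_ ?_)
  · exact forall₂_congr fun i hi => by rw [now_truthAssignment hi, eq_decide_iff]; rfl
  · exact forall₂_congr fun i hi => by rw [next_truthAssignment hi, eq_decide_iff]; rfl
  · refine forall₂_congr fun i hi => forall₂_congr fun k hk => ?_
    rw [since_truthAssignment hi hk, eq_decide_iff, @eq_comm _ k i]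

end TruthAssignment

/-- No valuation realises it, since `x_1` implies `x_0 S x_1`. -/
def unsatAssignment (n : ℕ) : Assignment := (List.replicate n true, [], [])

theorem not_sat_rnfDisjunct_unsatAssignment {m n : ℕ} {W : ℕ → Set ℕ} {a : ℕ}
    (hn : 2 ≤ n) :
    ¬ Sat m W (rnfDisjunct n (unsatAssignment n)) a := by
  rw [sat_rnfDisjunct]
  rintro ⟨hnow, -, hsince⟩
  have h1 := hnow 1 (by omega)
  have h01 := hsince 0 (by omega) 1 (by omega) zero_ne_one
  rw [now_truthAssignment (by omega)] at h1
  rw [since_truthAssignment (by omega) (by omega)] at h01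
  have h1n : 1 < n := by omega
  simp [unsatAssignment, now, since, List.getD_eq_getElem?_getD, h1n] at h1 h01
  exact h01 (sat_since_of_sat_right h1)

namespace Formula

/-- The formula defining the variable of `φ` (at position `L.idxOf φ`) from the variables of the
immediate subformulas of `φ`. -/
def definiens (L : List Formula) : Formula → Formula
  | atom p => atom (L.idxOf (atom p))
  | neg φ => neg (atom (L.idxOf φ))
  | conj φ ψ => conj (atom (L.idxOf φ)) (atom (L.idxOf ψ))
  | next φ => next (atom (L.idxOf φ))
  | since φ ψ => since (atom (L.idxOf φ)) (atom (L.idxOf ψ))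

/-- A disjunct has no literal `x_i S x_i`, which is equivalent to `x_i`. -/
def definiensValue (L : List Formula) (t : Assignment) : Formula → Bool
  | atom p => t.now (L.idxOf (atom p))
  | neg φ => !t.now (L.idxOf φ)
  | conj φ ψ => t.now (L.idxOf φ) && t.now (L.idxOf ψ)
  | next φ => t.next (L.idxOf φ)
  | since φ ψ =>
    if L.idxOf φ = L.idxOf ψ then t.now (L.idxOf φ)
    else t.since L.length (L.idxOf φ) (L.idxOf ψ)

end Formula

open Formula

def SubformulaClosed (L : List Formula) : Prop := ∀ φ ∈ L, ∀ ψ ∈ φ.children, ψ ∈ L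

def Coherent (m : ℕ) (L : List Formula) (W : ℕ → Set ℕ) (a : ℕ) (φ : Formula) : Prop :=
  a ∈ W (L.idxOf φ) ↔ Sat m W (definiens L φ) a

def Accepts (L Γ : List Formula) (t : Assignment) : Prop :=
  (∀ φ ∈ L, t.now (L.idxOf φ) = definiensValue L t φ) ∧
    ∀ γ ∈ Γ, t.now (L.idxOf γ) = true

instance (L Γ : List Formula) : DecidablePred (Accepts L Γ) := fun _ => by
  unfold Accepts; infer_instance

section Accepts

variable {m : ℕ} {W : ℕ → Set ℕ} {a : ℕ} {L Γ : List Formula}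

open Classical in
theorem definiensValue_truthAssignment (hL : SubformulaClosed L) {φ : Formula} (hφ : φ ∈ L) :
    definiensValue L (truthAssignment m W a L.length) φ = decide (Sat m W (definiens L φ) a) := by
  have hch := hL φ hφ
  cases φ <;> simp only [children, List.mem_cons, List.not_mem_nil, or_false, forall_eq_or_imp,
    forall_eq] at hch
  case since φ ψ =>
    simp only [definiensValue, definiens]
    split_ifs with h
    · simp only [h, sat_since_self, now_truthAssignment (List.idxOf_lt_length_of_mem hch.2)]
      exact decide_eq_decide.mpr Iff.rfl
    · rw [since_truthAssignment (List.idxOf_lt_length_of_mem hch.1)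
        (List.idxOf_lt_length_of_mem hch.2)]
      exact decide_eq_decide.mpr Iff.rfl
  all_goals simp [definiensValue, definiens, Sat, now_truthAssignment, next_truthAssignment,
    List.idxOf_lt_length_of_mem, *]

open Classical in
theorem accepts_truthAssignment_iff (hL : SubformulaClosed L) (hΓ : ∀ γ ∈ Γ, γ ∈ L) :
    Accepts L Γ (truthAssignment m W a L.length) ↔
      (∀ φ ∈ L, Coherent m L W a φ) ∧ ∀ γ ∈ Γ, a ∈ W (L.idxOf γ) := by
  refine and_congr (forall₂_congr fun φ hφ => ?_) (forall₂_congr fun γ hγ => ?_)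
  · rw [definiensValue_truthAssignment hL hφ,
      now_truthAssignment (List.idxOf_lt_length_of_mem hφ), decide_eq_decide]
    rfl
  · rw [now_truthAssignment (List.idxOf_lt_length_of_mem (hΓ γ hγ)), decide_eq_true_iff]

theorem definiensValue_congr {t t' : Assignment} (h : Agree L.length t t')
    (hL : SubformulaClosed L) {φ : Formula} (hφ : φ ∈ L) :
    definiensValue L t φ = definiensValue L t' φ := by
  obtain ⟨hnow, hnext, hsince⟩ := h
  have hch := hL φ hφ
  cases φ <;> simp only [children, List.mem_cons, List.not_mem_nil, or_false, forall_eq_or_imp,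
    forall_eq] at hch
  case since φ ψ =>
    simp only [definiensValue]
    split_ifs with h
    · exact hnow _ (List.idxOf_lt_length_of_mem hch.1)
    · exact hsince _ (List.idxOf_lt_length_of_mem hch.1) _ (List.idxOf_lt_length_of_mem hch.2) h
  all_goals simp [definiensValue, List.idxOf_lt_length_of_mem, *]

theorem accepts_congr {t t' : Assignment} (h : Agree L.length t t') (hL : SubformulaClosed L)
    (hΓ : ∀ γ ∈ Γ, γ ∈ L) : Accepts L Γ t ↔ Accepts L Γ t' := by
  refine and_congr (forall₂_congr fun φ hφ => ?_) (forall₂_congr fun γ hγ => ?_)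
  · rw [definiensValue_congr h hL hφ, h.1 _ (List.idxOf_lt_length_of_mem hφ)]
  · rw [h.1 _ (List.idxOf_lt_length_of_mem (hΓ γ hγ))]

end Accepts

/-- The premise of the reduced normal form with variables `x_i` standing for the formulas `L[i]`.
The unsatisfiable disjunct makes the disjunction nonempty without changing its meaning. -/
def rnfPremise (L Γ : List Formula) : Formula :=
  bigDisj ((((assignments L.length).filter fun t => decide (Accepts L Γ t)) ++
    [unsatAssignment L.length]).map (rnfDisjunct L.length))

theorem sat_rnfPremise {m : ℕ} {W : ℕ → Set ℕ} {a : ℕ} {L Γ : List Formula}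
    (hn : 2 ≤ L.length) (hL : SubformulaClosed L) (hΓ : ∀ γ ∈ Γ, γ ∈ L) :
    Sat m W (rnfPremise L Γ) a ↔ Accepts L Γ (truthAssignment m W a L.length) := by
  simp only [rnfPremise, sat_bigDisj, List.map_append, List.mem_append, List.mem_map,
    List.mem_filter, decide_eq_true_eq, List.map_cons, List.map_nil, List.mem_singleton]
  constructor
  · rintro ⟨_, (⟨t, ⟨-, ht⟩, rfl⟩ | rfl), hsat⟩
    · exact (accepts_congr (sat_rnfDisjunct.1 hsat) hL hΓ).1 ht
    · exact absurd hsat (not_sat_rnfDisjunct_unsatAssignment hn)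
  · exact fun h => ⟨_, .inl ⟨_, ⟨truthAssignment_mem_assignments, h⟩, rfl⟩,
      sat_rnfDisjunct.2 (Agree.refl _ _)⟩

section Coherence

variable {m : ℕ} {L : List Formula} {W : ℕ → Set ℕ}

theorem coherent_of_eq (hL : SubformulaClosed L) {U : ℕ → Set ℕ}
    (hW : ∀ φ ∈ L, W (L.idxOf φ) = {b | Sat m U φ b}) {a : ℕ} {φ : Formula}
    (hφ : φ ∈ L) :
    Coherent m L W a φ := by
  have hch : ∀ ψ ∈ φ.children, W (L.idxOf ψ) = {b | Sat m U ψ b} := fun ψ hψ =>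
    hW ψ (hL φ hφ ψ hψ)
  cases φ <;> simp_all [Coherent, definiens, children, Sat]

theorem sat_iff_mem_of_coherent (hL : SubformulaClosed L)
    (hW : ∀ a, ∀ φ ∈ L, Coherent m L W a φ) {φ : Formula} (hφ : φ ∈ L) (a : ℕ) :
    Sat m (fun p => W (L.idxOf (.atom p))) φ a ↔ a ∈ W (L.idxOf φ) := by
  induction φ generalizing a with
  | atom p => rfl
  | neg φ ih =>
    exact (not_congr (ih (hL _ hφ φ (by simp [children])) a)).trans (hW a _ hφ).symm
  | conj φ ψ ih ih' =>
    exact (and_congr (ih (hL _ hφ φ (by simp [children])) a)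
      (ih' (hL _ hφ ψ (by simp [children])) a)).trans (hW a _ hφ).symm
  | next φ ih => exact (ih (hL _ hφ φ (by simp [children])) (a + 1)).trans (hW a _ hφ).symm
  | since φ ψ ih ih' =>
    exact (sat_since_congr (ih (hL _ hφ φ (by simp [children])))
      (ih' (hL _ hφ ψ (by simp [children])))).trans (hW a _ hφ).symm

end Coherence

section Admissibility

variable {m : ℕ} {φ : Formula} {L Γ : List Formula}

theorem admissible_of_admissible_rnf (hL : SubformulaClosed (φ :: L))
    (hΓ : ∀ γ ∈ Γ, γ ∈ φ :: L) (hn : L ≠ [])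
    (h : Admissible m ⟨[rnfPremise (φ :: L) Γ], .atom 0⟩) : Admissible m ⟨Γ, φ⟩ := by
  intro σ hσ
  let τ j := substF σ ((φ :: L).getD j φ)
  have hτ : ∀ ψ ∈ φ :: L, τ ((φ :: L).idxOf ψ) = substF σ ψ := fun ψ hψ => by
    simp only [τ, List.getD_eq_getElem _ _ (List.idxOf_lt_length_of_mem hψ), List.getElem_idxOf]
  have hprem : substF τ (rnfPremise (φ :: L) Γ) ∈ Logic m := fun V a => by
    rw [sat_substF, sat_rnfPremise (by simpa [Nat.two_le_iff] using hn) hL hΓ,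
      accepts_truthAssignment_iff hL hΓ]
    refine ⟨fun ψ hψ => coherent_of_eq hL (U := substValuation m V σ) (fun χ hχ => ?_) hψ,
      fun γ hγ => ?_⟩
    · ext b
      simp [substValuation, hτ χ hχ, sat_substF]
    · show Sat m V (τ _) a
      rw [hτ γ (hΓ γ hγ)]
      exact hσ γ hγ V a
  simpa [τ, substF] using h τ (by simpa using hprem)

theorem admissible_rnf_of_admissible (hL : SubformulaClosed (φ :: L))
    (hΓ : ∀ γ ∈ Γ, γ ∈ φ :: L) (hn : L ≠ []) (h : Admissible m ⟨Γ, φ⟩) :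
    Admissible m ⟨[rnfPremise (φ :: L) Γ], .atom 0⟩ := by
  intro τ hτ
  have hacc : ∀ V a, (∀ ψ ∈ φ :: L, Coherent m (φ :: L) (substValuation m V τ) a ψ) ∧
      ∀ γ ∈ Γ, Sat m V (τ ((φ :: L).idxOf γ)) a := fun V a =>
    (accepts_truthAssignment_iff hL hΓ).1 <|
      (sat_rnfPremise (by simpa [Nat.two_le_iff] using hn) hL hΓ).1 <|
        sat_substF.1 (hτ _ (List.mem_singleton_self _) V a)
  let σ p := τ ((φ :: L).idxOf (.atom p))
  have hσ : ∀ V, ∀ ψ ∈ φ :: L, ∀ a,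
      Sat m V (substF σ ψ) a ↔ Sat m V (τ ((φ :: L).idxOf ψ)) a := fun V ψ hψ a =>
    sat_substF.trans <| sat_iff_mem_of_coherent hL (fun a => (hacc V a).1) hψ a
  intro V a
  simpa [substF] using (hσ V φ (List.mem_cons_self ..) a).1 <|
    h σ (fun γ hγ V a => (hσ V γ (hΓ γ hγ) a).2 ((hacc V a).2 γ hγ)) V a

end Admissibility

theorem le_encode_of_mem {x : ℕ} {l : List ℕ} (h : x ∈ l) : x ≤ Encodable.encode l := by
  induction l with
  | nil => cases h
  | cons y l ih =>
    rw [Encodable.encode_list_cons, Encodable.encode_nat]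
    rcases List.mem_cons.1 h with rfl | h
    · exact (Nat.left_le_pair _ _).trans (Nat.le_succ _)
    · exact (ih h).trans ((Nat.right_le_pair _ _).trans (Nat.le_succ _))

namespace Rule

def varList (r : Rule) : List Formula :=
  r.conclusion :: (List.range (encR r + 1)).map decF

def rnf (r : Rule) : Rule := ⟨[rnfPremise r.varList r.premises], .atom 0⟩

variable {r : Rule}

theorem encF_le_encR_of_mem_varList {φ : Formula} (h : φ ∈ r.varList) : encF φ ≤ encR r := by
  rcases List.mem_cons.1 h with rfl | h
  · exact Nat.right_le_pair _ _
  · obtain ⟨j, hj, rfl⟩ := List.mem_map.1 h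
    rw [encF_decF]
    exact Nat.lt_succ_iff.1 (List.mem_range.1 hj)

theorem mem_varList_of_encF_le {φ : Formula} (h : encF φ ≤ encR r) : φ ∈ r.varList :=
  List.mem_cons_of_mem _ <| List.mem_map.2 ⟨encF φ, List.mem_range.2 (Nat.lt_succ_of_le h),
    decF_encF φ⟩

theorem subformulaClosed_varList : SubformulaClosed r.varList := fun _ hφ _ hψ =>
  mem_varList_of_encF_le ((encF_lt_of_mem_children hψ).le.trans
    (encF_le_encR_of_mem_varList hφ))

theorem premises_subset_varList : ∀ γ ∈ r.premises, γ ∈ r.varList := fun _ hγ =>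
  mem_varList_of_encF_le <| (le_encode_of_mem (List.mem_map_of_mem (f := encF) hγ)).trans
    (Nat.left_le_pair _ _)

theorem admissible_iff_admissible_rnf {m : ℕ} : Admissible m r ↔ Admissible m r.rnf :=
  have hn : (List.range (encR r + 1)).map decF ≠ [] := by simp
  ⟨admissible_rnf_of_admissible subformulaClosed_varList premises_subset_varList hn,
    admissible_of_admissible_rnf subformulaClosed_varList premises_subset_varList hn⟩

theorem isRNF_rnf : IsRNF r.rnf := by
  set n := r.varList.length
  refine ⟨n, List.length_pos_of_ne_nil (List.cons_ne_nil _ _),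
    ((((assignments n).filter fun t => decide (Accepts r.varList r.premises t)) ++
      [unsatAssignment n]).map fun t => (fun i => t.now i, fun i => t.next i,
        fun i k => t.since n i k)), by simp, ?_, rfl⟩
  simp only [rnf, rnfPremise, List.map_map]
  exact congrArg (fun l => [bigDisj l]) <|
    List.map_congr_left fun t _ => rnfDisjunct_eq_disjunct n t

end Rule

section Computability

open Primrec Assignment

theorem primrec_of_foldr1 {α : Type*} [Primcodable α] {f : List α → α} {op : α → α → α}
    (e : α) (hop : Primrec₂ op) (hnil : f [] = e) (hsingle : ∀ x, f [x] = x)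
    (hcons : ∀ x y l, f (x :: y :: l) = op x (f (y :: l))) : Primrec f := by
  let g : List α → Option α := List.foldr (fun x o => some (o.elim x (op x))) none
  have hg : ∀ x l, g (x :: l) = some (f (x :: l)) := fun x l => by
    induction l generalizing x with
    | nil => simp [g, hsingle]
    | cons y l ih =>
      change some ((g (y :: l)).elim x (op x)) = _
      rw [ih, hcons]
      rfl
  have hstep : Primrec fun q : List α × α × Option α => q.2.2.elim q.2.1 (op q.2.1) :=
    (option_casesOn (snd.comp snd) (fst.comp snd)
      (hop.comp (fst.comp (snd.comp fst)) snd).to₂).of_eq fun q => by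
        rcases q with ⟨_, _, _ | _⟩ <;> rfl
  have hgp : Primrec g := (list_foldr .id (const none) (option_some.comp hstep).to₂).of_eq
    fun _ => rfl
  refine (option_getD.comp hgp (const e)).of_eq fun l => ?_
  cases l with
  | nil => simp [g, hnil]
  | cons x l => simp [hg]

theorem primrec_disj : Primrec₂ Formula.disj :=
  primrec_neg.comp (primrec_conj.comp (primrec_neg.comp fst) (primrec_neg.comp snd))

theorem primrec_bigConj : Primrec bigConj :=
  primrec_of_foldr1 _ primrec_conj rfl (fun _ => rfl) fun _ _ _ => rfl

theorem primrec_bigDisj : Primrec bigDisj :=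
  primrec_of_foldr1 _ primrec_disj rfl (fun _ => rfl) fun _ _ _ => rfl

theorem primrec_lit : Primrec₂ lit :=
  (cond fst snd (primrec_neg.comp snd)).of_eq fun q => by cases q.1 <;> rfl

theorem Assignment.primrec_now : Primrec₂ now :=
  (list_getD false).comp (fst.comp fst) snd

theorem Assignment.primrec_next : Primrec₂ Assignment.next :=
  (list_getD false).comp (fst.comp (snd.comp fst)) snd

theorem Assignment.primrec_since {α : Type*} [Primcodable α] {t : α → Assignment}
    {n i k : α → ℕ} (ht : Primrec t) (hn : Primrec n) (hi : Primrec i) (hk : Primrec k) :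
    Primrec fun a => (t a).since (n a) (i a) (k a) :=
  (list_getD false).comp (snd.comp (snd.comp ht)) (nat_add.comp (nat_mul.comp hi hn) hk)

theorem primrec_boolLists : Primrec boolLists :=
  (nat_rec₁ [[]] (list_flatMap snd (list_cons.comp (list_cons.comp (const true) snd)
    (list_cons.comp (list_cons.comp (const false) snd) (const []))).to₂).to₂).of_eq fun n => by
      induction n with
      | zero => rfl
      | succ n ih => simp only [boolLists, ← ih]

theorem primrec_list_product {β γ : Type*} [Primcodable β] [Primcodable γ] :
    Primrec₂ fun (l : List β) (l' : List γ) => l ×ˢ l' :=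
  (list_flatMap fst
    (list_map (snd.comp fst) (Primrec₂.pair.comp (snd.comp fst) snd).to₂).to₂).of_eq
      fun _ => rfl

theorem primrec_assignments : Primrec assignments :=
  primrec_list_product.comp primrec_boolLists <| primrec_list_product.comp primrec_boolLists <|
    primrec_boolLists.comp (nat_mul.comp .id .id)

theorem primrec_rnfDisjunct : Primrec₂ rnfDisjunct := by
  have hnow : Primrec fun a : ℕ × Assignment =>
      (List.range a.1).map fun i => lit (a.2.now i) (.atom i) :=
    list_map (list_range.comp fst)
      (primrec_lit.comp (primrec_now.comp (snd.comp fst) snd) (primrec_atom.comp snd)).to₂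
  have hnext : Primrec fun a : ℕ × Assignment =>
      (List.range a.1).map fun i => lit (a.2.next i) (.next (.atom i)) :=
    list_map (list_range.comp fst)
      (primrec_lit.comp (Assignment.primrec_next.comp (snd.comp fst) snd)
        (primrec_next.comp (primrec_atom.comp snd))).to₂
  have hne : Primrec₂ fun (i : ℕ) (l : List ℕ) => l.filter fun k => k != i :=
    (PrimrecRel.listFilter (PrimrecRel.not Primrec.eq)).swap.of_eq fun i l => by
      simp only [Function.swap, bne, beq_eq_decide, decide_not]
  have hsince : Primrec fun a : ℕ × Assignment =>
      (List.range a.1).flatMap fun i => ((List.range a.1).filter fun k => k != i).map fun k =>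
        lit (a.2.since a.1 i k) (.since (.atom i) (.atom k)) :=
    list_flatMap (list_range.comp fst) <| to₂ <|
      list_map (hne.comp snd (list_range.comp (fst.comp fst))) <| to₂ <| primrec_lit.comp
        (Assignment.primrec_since (snd.comp (fst.comp fst)) (fst.comp (fst.comp fst))
          (snd.comp fst) snd)
        (primrec_since.comp (primrec_atom.comp (snd.comp fst)) (primrec_atom.comp snd))
  exact primrec_bigConj.comp (list_append.comp (list_append.comp hnow hnext) hsince)

theorem primrec_unsatAssignment : Primrec unsatAssignment :=
  ((list_map list_range (const true).to₂).pair (const ([], []))).of_eq fun n => by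
    simp [unsatAssignment, List.map_const']

theorem primrec_definiensValue :
    Primrec fun q : (List Formula × Assignment) × Formula => definiensValue q.1.1 q.1.2 q.2 := by
  have hidx : ∀ {β : Type} [Primcodable β]
      {g : ((List Formula × Assignment) × Formula) × β → Formula}, Primrec g →
        Primrec fun x : ((List Formula × Assignment) × Formula) × β => x.1.1.1.idxOf (g x) :=
    fun hg =>
    list_idxOf.comp hg (fst.comp (fst.comp fst))
  have ht : ∀ {β : Type} [Primcodable β],
      Primrec fun x : ((List Formula × Assignment) × Formula) × β => x.1.1.2 :=
    snd.comp (fst.comp fst)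
  refine (primrec_casesOn snd
    (primrec_now.comp ht (hidx (primrec_atom.comp snd))).to₂
    (Primrec.not.comp (primrec_now.comp ht (hidx snd))).to₂
    (Primrec.and.comp (primrec_now.comp ht (hidx (fst.comp snd)))
      (primrec_now.comp ht (hidx (snd.comp snd)))).to₂
    (Assignment.primrec_next.comp ht (hidx snd)).to₂
    (Primrec.ite (Primrec.eq.comp (hidx (fst.comp snd)) (hidx (snd.comp snd)))
      (primrec_now.comp ht (hidx (fst.comp snd)))
      (Assignment.primrec_since ht (list_length.comp (fst.comp (fst.comp fst)))
        (hidx (fst.comp snd)) (hidx (snd.comp snd)))).to₂).of_eq fun q => ?_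
  rcases q with ⟨⟨L, t⟩, _ | _ | _ | _ | _⟩ <;> rfl

theorem primrecPred_accepts :
    PrimrecPred fun q : (List Formula × List Formula) × Assignment =>
      Accepts q.1.1 q.1.2 q.2 := by
  have hnow : Primrec fun x : Formula × (List Formula × Assignment) =>
      x.2.2.now (x.2.1.idxOf x.1) :=
    primrec_now.comp (snd.comp snd) (list_idxOf.comp fst (fst.comp snd))
  have hcoh : PrimrecRel fun (φ : Formula) (b : List Formula × Assignment) =>
      b.2.now (b.1.idxOf φ) = definiensValue b.1 b.2 φ :=
    Primrec.eq.comp hnow (primrec_definiensValue.comp (snd.pair fst))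
  have htrue : PrimrecRel fun (γ : Formula) (b : List Formula × Assignment) =>
      b.2.now (b.1.idxOf γ) = true :=
    Primrec.eq.comp hnow (const true)
  exact ((PrimrecRel.forall_mem_list hcoh).comp (fst.comp fst) ((fst.comp fst).pair snd)).and
    ((PrimrecRel.forall_mem_list htrue).comp (snd.comp fst) ((fst.comp fst).pair snd))

theorem primrec_rnfPremise : Primrec₂ rnfPremise := by
  have hfilter : Primrec fun p : List Formula × List Formula =>
      (assignments p.1.length).filter fun t => decide (Accepts p.1 p.2 t) :=
    (PrimrecRel.listFilter (R := fun t (p : List Formula × List Formula) => Accepts p.1 p.2 t)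
      (primrecPred_accepts.comp (snd.pair fst))).comp
        (primrec_assignments.comp (list_length.comp fst)) .id
  exact primrec_bigDisj.comp <| list_map (list_append.comp hfilter
    (list_cons.comp (primrec_unsatAssignment.comp (list_length.comp fst)) (const [])))
      (primrec_rnfDisjunct.comp (list_length.comp (fst.comp fst)) snd).to₂

end Computability

namespace Rule

open Primrec

def equivProd : Rule ≃ List Formula × Formula :=
  ⟨fun r => (r.premises, r.conclusion), fun p => ⟨p.1, p.2⟩, fun _ => rfl, fun _ => rfl⟩

instance : Primcodable Rule := Primcodable.ofEquiv _ equivProd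

instance : Inhabited Rule := ⟨⟨[], .atom 0⟩⟩

theorem encode_list_formula (l : List Formula) :
    Encodable.encode l = Encodable.encode (l.map encF) := by
  induction l with
  | nil => rfl
  | cons φ l ih => simp only [List.map_cons, Encodable.encode_list_cons, ih]; rfl

theorem encode_eq_encR (r : Rule) : Encodable.encode r = encR r := by
  change Encodable.encode (r.premises, r.conclusion) = _
  rw [Encodable.encode_prod_val, encode_list_formula]
  rfl

theorem primrec_premises : Primrec premises := fst.comp (Primrec.of_equiv (e := equivProd))

theorem primrec_conclusion : Primrec conclusion := snd.comp (Primrec.of_equiv (e := equivProd))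

theorem primrec_mk : Primrec₂ Rule.mk := Primrec.of_equiv_symm (e := equivProd)

theorem primrec_varList : Primrec varList :=
  list_cons.comp primrec_conclusion <| list_map (list_range.comp (succ.comp
    ((Primrec.encode (α := Rule)).of_eq encode_eq_encR))) (primrec_decF.comp snd).to₂

theorem primrec_rnf : Primrec rnf :=
  primrec_mk.comp (list_cons.comp (primrec_rnfPremise.comp primrec_varList primrec_premises)
    (const [])) (const (Formula.atom 0))

end Rule

theorem reduced_normal_form_for_admissibility_general (m : ℕ) :
    ∃ F : Rule → Rule,
      (∃ g : ℕ → ℕ, Computable g ∧ ∀ r : Rule, encR (F r) = g (encR r)) ∧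
      (∀ r : Rule, IsRNF (F r)) ∧
      (∀ r : Rule, Admissible m r ↔ Admissible m (F r)) := by
  refine ⟨Rule.rnf, ⟨fun c => encR ((Encodable.decode c).getD default : Rule).rnf, ?_,
    fun r => ?_⟩, fun _ => Rule.isRNF_rnf, fun _ => Rule.admissible_iff_admissible_rnf⟩
  · exact ((Primrec.encode.comp (Rule.primrec_rnf.comp (Primrec.option_getD_default.comp
      Primrec.decode))).of_eq fun _ => Rule.encode_eq_encR _).to_comp
  · simp only [← Rule.encode_eq_encR r, Encodable.encodek, Option.getD_some]

/-- there is a computable function producing, for every rule, a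
rule in reduced normal form which is admissible in `LTL_{Past,m}` iff the
original rule is. -/
theorem reduced_normal_form_for_admissibility (m : ℕ) (hm : 1 ≤ m) :
    ∃ F : Rule → Rule,
      (∃ g : ℕ → ℕ, Computable g ∧ ∀ r : Rule, encR (F r) = g (encR r)) ∧
      (∀ r : Rule, IsRNF (F r)) ∧
      (∀ r : Rule, Admissible m r ↔ Admissible m (F r)) :=
  reduced_normal_form_for_admissibility_general m
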